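/- arXiv:2112.14136 — 2 statements merged into one kernel-verified Lean document; each statement's English description precedes it below -/
import Mathlib

section
/- Let G : ℝ^d \ {0} → ℝ be a function homogeneous of degree -(d-1) and of class C^1 off the origin. Then for each i = 1,...,d, the integral of the partial derivative ∂_i G over the unit sphere (with respect to surface measure) equals zero. -/
/-!
Linear isometries act transitively on the unit sphere and preserve both `μH[d - 1]` and the
polar-coordinate measure `volume.toSphere`, so for each of them all balls of a given radius have
the same measure. On a compact metric space two finite nonzero measures with this property are
proportional (Fatou's lemma and Fubini on small balls), while an infinite one only integrates
continuous functions to `0`. It therefore suffices to treat `volume.toSphere`. Integrating by parts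
against a radial cutoff `φ ‖x‖` and passing to polar coordinates, the homogeneity of `G` (degree
`1 - d`) and of `∂ᵢG` (degree `-d`) gives
`(∫_S ∂ᵢG) * ∫₀^∞ φ r / r dr = -(∫_S ωᵢ G ω) * ∫₀^∞ φ' r dr = 0`.
-/

open MeasureTheory Filter Topology Metric Set
open scoped ENNReal Pointwise RealInnerProductSpace

namespace MeasureTheory

variable {X : Type*} [MetricSpace X] [MeasurableSpace X]

theorem integral_eq_zero_of_forall_measure_ball_eq_top {μ : Measure X}
    (hμ : ∀ (x : X) (r : ℝ), 0 < r → μ (ball x r) = ∞) {f : X → ℝ} (hf : Continuous f) :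
    ∫ x, f x ∂μ = 0 := by
  by_cases hint : Integrable f μ
  swap
  · exact integral_undef hint
  suffices f = 0 by simp [this]
  ext x
  by_contra hx
  have hε : 0 < ‖f x‖ / 2 := by positivity
  obtain ⟨δ, hδ, hball⟩ := Metric.isOpen_iff.mp (isOpen_lt continuous_const hf.norm) x
    (show ‖f x‖ / 2 < ‖f x‖ by linarith)
  have hball_le : μ (ball x δ) ≤ μ {y | ‖f x‖ / 2 ≤ ‖f y‖} :=
    measure_mono fun y hy => show ‖f x‖ / 2 ≤ ‖f y‖ from le_of_lt (hball hy)
  exact (hint.measure_norm_ge_lt_top hε).ne (top_le_iff.mp (hμ x δ hδ ▸ hball_le))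

namespace Measure

def IsUniformlyDistributed (μ : Measure X) : Prop :=
  ∀ (x y : X) (r : ℝ), μ (ball x r) = μ (ball y r)

namespace IsUniformlyDistributed

variable {μ ν : Measure X} [CompactSpace X]

theorem exists_measure_univ_le_mul (hμ : μ.IsUniformlyDistributed) (x : X) {r : ℝ}
    (hr : 0 < r) : ∃ N : ℕ, μ univ ≤ N * μ (ball x r) := by
  obtain ⟨t, ht⟩ := isCompact_univ.elim_finite_subcover (fun y : X => ball y r)
    (fun _ => isOpen_ball) (fun y _ => mem_iUnion.2 ⟨y, mem_ball_self hr⟩)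
  refine ⟨t.card, (measure_mono ht).trans ((measure_biUnion_finset_le t _).trans ?_)⟩
  simp [Finset.sum_congr rfl fun y _ => hμ y x r]

theorem measure_ball_pos (hμ : μ.IsUniformlyDistributed) (hμ0 : μ ≠ 0) (x : X) {r : ℝ}
    (hr : 0 < r) : 0 < μ (ball x r) := by
  obtain ⟨N, hN⟩ := hμ.exists_measure_univ_le_mul x hr
  refine pos_iff_ne_zero.mpr fun h => hμ0 ?_
  simpa [h] using hN

theorem measure_ball_eq_top (hμ : μ.IsUniformlyDistributed) (htop : μ univ = ∞) (x : X)
    {r : ℝ} (hr : 0 < r) : μ (ball x r) = ∞ := by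
  obtain ⟨N, hN⟩ := hμ.exists_measure_univ_le_mul x hr
  by_contra h
  exact (ENNReal.mul_lt_top (ENNReal.natCast_lt_top N) (lt_top_iff_ne_top.mpr h)).ne
    (top_le_iff.mp (htop ▸ hN))

end IsUniformlyDistributed

end Measure

section SecondCountable

variable [BorelSpace X] [SecondCountableTopology X]

theorem measurableSet_dist_lt (r : ℝ) : MeasurableSet {p : X × X | dist p.1 p.2 < r} :=
  (isOpen_lt continuous_dist continuous_const).measurableSet

theorem measurable_measure_ball_inter (ν : Measure X) [SFinite ν] (U : Set X) (r : ℝ) :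
    Measurable fun x => ν (ball x r ∩ U) := by
  convert measurable_measure_prodMk_left (ν := ν.restrict U) (measurableSet_dist_lt r) using 2
    with x
  rw [← Measure.restrict_apply measurableSet_ball]
  congr 1
  ext y
  simp [dist_comm]

theorem lintegral_measure_ball_inter_comm (μ ν : Measure X) [SFinite μ] [SFinite ν]
    (U : Set X) (r : ℝ) :
    ∫⁻ x in U, ν (ball x r ∩ U) ∂μ = ∫⁻ y in U, μ (ball y r ∩ U) ∂ν := by
  have h := (Measure.prod_apply (μ := μ.restrict U) (ν := ν.restrict U)
    (measurableSet_dist_lt r)).symm.trans (Measure.prod_apply_symm (measurableSet_dist_lt r))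
  convert h using 3 with x y
  · rw [← Measure.restrict_apply measurableSet_ball]
    congr 1
    ext y
    simp [dist_comm]
  · rw [← Measure.restrict_apply measurableSet_ball]
    rfl

namespace Measure.IsUniformlyDistributed

variable {μ ν : Measure X}

theorem lintegral_measure_ball_inter_le (hμ : μ.IsUniformlyDistributed) [SFinite μ] [SFinite ν]
    (U : Set X) (x₀ : X) (r : ℝ) :
    ∫⁻ x in U, ν (ball x r ∩ U) ∂μ ≤ μ (ball x₀ r) * ν U := by
  rw [lintegral_measure_ball_inter_comm, ← setLIntegral_const]
  exact lintegral_mono fun y => (measure_mono inter_subset_left).trans (hμ y x₀ r).le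

theorem measure_ball_mul_measure_univ (hμ : μ.IsUniformlyDistributed)
    (hν : ν.IsUniformlyDistributed) [SFinite μ] [SFinite ν] (x : X) (r : ℝ) :
    μ (ball x r) * ν univ = ν (ball x r) * μ univ := by
  have h := lintegral_measure_ball_inter_comm μ ν univ r
  simp only [inter_univ, restrict_univ] at h
  rw [lintegral_congr fun y => hν y x r, lintegral_congr fun y => hμ y x r, lintegral_const,
    lintegral_const] at h
  exact h.symm

theorem inv_measure_ball_mul_measure_ball (hμ : μ.IsUniformlyDistributed)
    (hν : ν.IsUniformlyDistributed) [SFinite μ] [IsFiniteMeasure ν] {x : X} {r : ℝ}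
    (hx : ν (ball x r) ≠ 0) : (ν (ball x r))⁻¹ * μ (ball x r) = μ univ / ν univ := by
  rw [ENNReal.eq_div_iff (ne_bot_of_le_ne_bot hx (measure_mono (subset_univ _)))
      (measure_ne_top _ _), mul_left_comm, mul_comm (ν univ),
    hμ.measure_ball_mul_measure_univ hν, ← mul_assoc,
    ENNReal.inv_mul_cancel hx (measure_ne_top _ _), one_mul]

variable [CompactSpace X]

section Finite

variable [IsFiniteMeasure μ] [IsFiniteMeasure ν]

/-- Fatou's lemma along radii `r → 0`: for `x ∈ U` the ratio `ν (ball x r ∩ U) / ν (ball x₀ r)`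
tends to `1`, and by Fubini its `μ`-integral over `U` is at most
`μ (ball x₀ r) / ν (ball x₀ r) * ν U = μ univ / ν univ * ν U`. -/
theorem measure_le_of_isOpen (hμ : μ.IsUniformlyDistributed) (hν : ν.IsUniformlyDistributed)
    (hν0 : ν ≠ 0) {U : Set X} (hU : IsOpen U) : μ U ≤ μ univ / ν univ * ν U := by
  obtain ⟨x₀, -⟩ := nonempty_of_measure_ne_zero (measure_univ_ne_zero.mpr hν0)
  set r : ℕ → ℝ := fun n => 1 / (n + 1)
  have hr0 : Tendsto r atTop (𝓝 0) := tendsto_one_div_add_atTop_nhds_zero_nat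
  set g : ℕ → ℝ≥0∞ := fun n => ν (ball x₀ (r n))
  have hg0 : ∀ n, g n ≠ 0 := fun n =>
    (hν.measure_ball_pos hν0 x₀ Nat.one_div_pos_of_nat).ne'
  have hlim : ∀ x ∈ U, ∀ᶠ n in atTop, (g n)⁻¹ * ν (ball x (r n) ∩ U) = 1 := by
    intro x hx
    obtain ⟨ε, hε, hball⟩ := Metric.isOpen_iff.mp hU x hx
    filter_upwards [hr0.eventually (gt_mem_nhds hε)] with n hn
    rw [inter_eq_self_of_subset_left ((ball_subset_ball hn.le).trans hball), hν x x₀,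
      ENNReal.inv_mul_cancel (hg0 n) (measure_ne_top _ _)]
  have hbound : ∀ n, ∫⁻ x in U, (g n)⁻¹ * ν (ball x (r n) ∩ U) ∂μ ≤ μ univ / ν univ * ν U := by
    intro n
    rw [lintegral_const_mul _ (measurable_measure_ball_inter ν U (r n)),
      ← hμ.inv_measure_ball_mul_measure_ball hν (hg0 n), mul_assoc]
    exact mul_le_mul_right (hμ.lintegral_measure_ball_inter_le U x₀ (r n)) _
  calc μ U = ∫⁻ _ in U, 1 ∂μ := (setLIntegral_one U).symm
    _ ≤ ∫⁻ x in U, liminf (fun n => (g n)⁻¹ * ν (ball x (r n) ∩ U)) atTop ∂μ :=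
        setLIntegral_mono' hU.measurableSet fun x hx => by
          rw [liminf_congr (hlim x hx), liminf_const]
    _ ≤ liminf (fun n => ∫⁻ x in U, (g n)⁻¹ * ν (ball x (r n) ∩ U) ∂μ) atTop :=
        lintegral_liminf_le fun n => (measurable_measure_ball_inter ν U (r n)).const_mul _
    _ ≤ μ univ / ν univ * ν U :=
        (liminf_le_liminf (Eventually.of_forall hbound)).trans (liminf_const _).le

theorem eq_smul (hμ : μ.IsUniformlyDistributed) (hν : ν.IsUniformlyDistributed) (hμ0 : μ ≠ 0)
    (hν0 : ν ≠ 0) : μ = (μ univ / ν univ) • ν := by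
  have hopen : ∀ U, IsOpen U → μ U = (μ univ / ν univ) • ν U := by
    intro U hU
    refine le_antisymm (hμ.measure_le_of_isOpen hν hν0 hU) ?_
    calc μ univ / ν univ * ν U ≤ μ univ / ν univ * (ν univ / μ univ * μ U) := by
          gcongr
          exact hν.measure_le_of_isOpen hμ hμ0 hU
      _ = μ U := by
          rw [← mul_assoc, ← ENNReal.mul_div_right_comm,
            ENNReal.mul_div_cancel (measure_univ_ne_zero.mpr hμ0) (measure_ne_top _ _),
            ENNReal.div_self (measure_univ_ne_zero.mpr hν0) (measure_ne_top _ _), one_mul]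
  exact ext_of_generate_finite _ BorelSpace.measurable_eq isPiSystem_isOpen hopen
    (hopen univ isOpen_univ)

end Finite

theorem integral_eq_zero [IsFiniteMeasure ν] (hμ : μ.IsUniformlyDistributed)
    (hν : ν.IsUniformlyDistributed) (hν0 : ν ≠ 0) {f : X → ℝ} (hf : Continuous f)
    (h : ∫ x, f x ∂ν = 0) : ∫ x, f x ∂μ = 0 := by
  rcases eq_or_ne μ 0 with rfl | hμ0
  · simp
  rcases eq_top_or_lt_top (μ univ) with htop | hfin
  · exact integral_eq_zero_of_forall_measure_ball_eq_top
      (fun x _ hr => hμ.measure_ball_eq_top htop x hr) hf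
  have : IsFiniteMeasure μ := ⟨hfin⟩
  rw [hμ.eq_smul hν hμ0 hν0, integral_smul_measure, h, smul_zero]

end Measure.IsUniformlyDistributed

end SecondCountable

end MeasureTheory

section Sphere

variable {E : Type*} [NormedAddCommGroup E] [InnerProductSpace ℝ E]

theorem exists_linearIsometryEquiv_apply_eq {x y : E} (h : ‖x‖ = ‖y‖) :
    ∃ e : E ≃ₗᵢ[ℝ] E, e x = y :=
  ⟨_, Submodule.reflection_sub h⟩

theorem LinearIsometryEquiv.image_ball_inter_sphere (e : E ≃ₗᵢ[ℝ] E) (x : E) (r : ℝ) :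
    e '' (ball x r ∩ sphere 0 1) = ball (e x) r ∩ sphere 0 1 := by
  rw [image_inter e.injective, e.image_ball, e.image_sphere, map_zero]

theorem LinearIsometryEquiv.image_set_smul (e : E ≃ₗᵢ[ℝ] E) (I : Set ℝ) (A : Set E) :
    e '' (I • A) = I • e '' A := by
  simp only [← image2_smul, image_image2, image2_image_right, map_smul]

variable [MeasurableSpace E]

theorem isUniformlyDistributed_sphere_of_isometry_invariant {ν : Measure (sphere (0 : E) 1)}
    (F : Set E → ℝ≥0∞)
    (hν : ∀ (x : sphere (0 : E) 1) (r : ℝ), ν (ball x r) = F (ball (x : E) r ∩ sphere 0 1))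
    (hF : ∀ (e : E ≃ₗᵢ[ℝ] E) (A : Set E), F (e '' A) = F A) : ν.IsUniformlyDistributed := by
  intro x y r
  obtain ⟨e, he⟩ := exists_linearIsometryEquiv_apply_eq (x := (x : E)) (y := (y : E))
    (by simp [norm_eq_of_mem_sphere])
  rw [hν, hν, ← he, ← e.image_ball_inter_sphere, hF]

variable [BorelSpace E]

theorem isUniformlyDistributed_comap_hausdorffMeasure (s : ℝ) :
    (μH[s].comap ((↑) : sphere (0 : E) 1 → E)).IsUniformlyDistributed := by
  refine isUniformlyDistributed_sphere_of_isometry_invariant μH[s] (fun x r => ?_)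
    fun e A => e.isometry.hausdorffMeasure_image (Or.inr e.surjective) A
  rw [(MeasurableEmbedding.subtype_coe isClosed_sphere.measurableSet).comap_apply,
    Subtype.image_ball]
  rfl

variable [FiniteDimensional ℝ E]

theorem LinearIsometryEquiv.volume_image (e : E ≃ₗᵢ[ℝ] E) (A : Set E) :
    volume (e '' A) = volume A := by
  rw [e.image_eq_preimage_symm]
  exact e.symm.measurePreserving.measure_preimage_equiv
    (f := e.symm.toHomeomorph.toMeasurableEquiv) A

theorem isUniformlyDistributed_toSphere :
    (volume : Measure E).toSphere.IsUniformlyDistributed := by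
  refine isUniformlyDistributed_sphere_of_isometry_invariant
    (fun A => Module.finrank ℝ E * volume (Ioo (0 : ℝ) 1 • A)) (fun x r => ?_) fun e A => ?_
  · rw [Measure.toSphere_apply' _ measurableSet_ball, Subtype.image_ball]
    rfl
  · simp only [← e.image_set_smul, e.volume_image]

end Sphere

theorem integral_volumeIoiPow (n : ℕ) (g : ℝ → ℝ) :
    ∫ r, g r ∂Measure.volumeIoiPow n = ∫ r in Ioi (0 : ℝ), r ^ n * g r := by
  simp only [Measure.volumeIoiPow, ENNReal.ofReal]
  rw [integral_withDensity_eq_integral_smul ((measurable_subtype_coe.pow_const _).real_toNNReal),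
    integral_subtype_comap measurableSet_Ioi fun a : ℝ => Real.toNNReal (a ^ n) • g a]
  refine setIntegral_congr_fun measurableSet_Ioi fun r hr => ?_
  rw [NNReal.smul_def, Real.coe_toNNReal _ (pow_nonneg (le_of_lt hr) _), smul_eq_mul]

section Polar

variable {E : Type*} [NormedAddCommGroup E] [NormedSpace ℝ E] [Nontrivial E]
  [FiniteDimensional ℝ E] [MeasurableSpace E] [BorelSpace E] (μ : Measure E) [μ.IsAddHaarMeasure]

theorem integral_eq_integral_toSphere_mul_integral_Ioi {F f : E → ℝ} {g : ℝ → ℝ}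
    (hF : ∀ ω ∈ sphere (0 : E) 1, ∀ r : ℝ, 0 < r → F (r • ω) = f ω * g r) :
    ∫ x, F x ∂μ = (∫ ω : sphere (0 : E) 1, f ω ∂μ.toSphere) *
      ∫ r in Ioi (0 : ℝ), r ^ (Module.finrank ℝ E - 1) * g r := by
  rw [← integral_volumeIoiPow, ← integral_prod_mul,
    ← (μ.measurePreserving_homeomorphUnitSphereProd).integral_comp
      (Homeomorph.measurableEmbedding _)]
  conv_lhs => rw [← restrict_compl_singleton (μ := μ) 0,
    ← integral_subtype_comap (measurableSet_singleton _).compl]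
  refine integral_congr_ae (ae_of_all _ fun x => ?_)
  have hx : 0 < ‖(x : E)‖ := norm_pos_iff.mpr x.2
  simp only [homeomorphUnitSphereProd_apply_fst_coe, homeomorphUnitSphereProd_apply_snd_coe]
  rw [← hF _ (by simp [norm_smul, hx.ne']) _ hx, smul_inv_smul₀ hx.ne']

end Polar

theorem fderiv_smul_of_homogeneous {F : Type*} [NormedAddCommGroup F] [NormedSpace ℝ F]
    {G : F → ℝ} {a : ℝ} (hG : ∀ t : ℝ, 0 < t → ∀ x : F, x ≠ 0 → G (t • x) = t ^ a * G x)
    (hdiff : ∀ x : F, x ≠ 0 → DifferentiableAt ℝ G x) {t : ℝ} (ht : 0 < t) {x : F}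
    (hx : x ≠ 0) : fderiv ℝ G (t • x) = t ^ (a - 1) • fderiv ℝ G x := by
  have hcomp : HasFDerivAt (fun y => G (t • y)) (t • fderiv ℝ G (t • x)) x := by
    refine ((hdiff _ (smul_ne_zero ht.ne' hx)).hasFDerivAt.comp x
      ((hasFDerivAt_id x).const_smul t)).congr_fderiv ?_
    ext v
    simp
  have hscaled : HasFDerivAt (fun y => G (t • y)) (t ^ a • fderiv ℝ G x) x := by
    refine ((hdiff x hx).hasFDerivAt.const_mul (t ^ a)).congr_of_eventuallyEq ?_
    filter_upwards [isOpen_compl_singleton.mem_nhds hx] with y hy using hG t ht y hy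
  rw [Real.rpow_sub_one ht.ne', div_eq_inv_mul, mul_smul, ← hcomp.unique hscaled,
    inv_smul_smul₀ ht.ne']

section Norm

variable {E : Type*} [NormedAddCommGroup E]

theorem zero_notMem_tsupport_comp_norm {φ : ℝ → ℝ} (hφ0 : (0 : ℝ) ∉ tsupport φ) :
    (0 : E) ∉ tsupport (fun y : E => φ ‖y‖) := by
  rw [notMem_tsupport_iff_eventuallyEq] at hφ0 ⊢
  exact hφ0.comp_tendsto (continuous_norm.tendsto' 0 0 norm_zero)

theorem HasCompactSupport.comp_norm [ProperSpace E] {φ : ℝ → ℝ} (hφ : HasCompactSupport φ) :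
    HasCompactSupport (fun x : E => φ ‖x‖) := by
  obtain ⟨R, -, hR⟩ := hφ.exists_pos_le_norm
  refine HasCompactSupport.intro (isCompact_closedBall 0 R) fun x hx => hR _ ?_
  simpa using (not_le.mp (mem_closedBall_zero_iff.not.mp hx)).le

theorem integrable_mul_of_continuousOn_compl_zero [MeasurableSpace E]
    [OpensMeasurableSpace E] {μ : Measure E} [IsFiniteMeasureOnCompacts μ] {χ w : E → ℝ}
    (hχ : Continuous χ) (hχc : HasCompactSupport χ) (hχ0 : (0 : E) ∉ tsupport χ)
    (hw : ContinuousOn w {0}ᶜ) : Integrable (fun x => χ x * w x) μ :=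
  ((hχ.continuousOn.mul hw).continuous_of_tsupport_subset isOpen_compl_singleton
    (tsupport_mul_subset_left.trans (subset_compl_singleton_iff.mpr hχ0)))
    |>.integrable_of_hasCompactSupport hχc.mul_right

end Norm

section InnerProductSpace

variable {E : Type*} [NormedAddCommGroup E] [InnerProductSpace ℝ E]

theorem hasFDerivAt_norm {x : E} (hx : x ≠ 0) :
    HasFDerivAt (‖·‖) (‖x‖⁻¹ • innerSL ℝ x) x := by
  have h := (Real.hasDerivAt_sqrt (by positivity : ‖x‖ ^ 2 ≠ 0)).comp_hasFDerivAt x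
    (hasStrictFDerivAt_norm_sq x).hasFDerivAt
  simp only [Function.comp_def, Real.sqrt_sq (norm_nonneg _)] at h
  refine h.congr_fderiv ?_
  ext v
  simp only [one_div, mul_inv_rev, smul_apply, coe_innerSL_apply, nsmul_eq_mul,
    Nat.cast_ofNat, smul_eq_mul]
  ring

theorem hasFDerivAt_comp_norm {φ : ℝ → ℝ} (hφ : Differentiable ℝ φ) (hφ0 : (0 : ℝ) ∉ tsupport φ)
    (x : E) : HasFDerivAt (fun y => φ ‖y‖) ((deriv φ ‖x‖ * ‖x‖⁻¹) • innerSL ℝ x) x := by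
  rcases eq_or_ne x 0 with rfl | hx
  · simp only [norm_zero, inv_zero, mul_zero, zero_smul]
    exact HasFDerivAt.of_notMem_tsupport ℝ (zero_notMem_tsupport_comp_norm hφ0)
  · rw [mul_smul]
    exact (hφ _).hasDerivAt.comp_hasFDerivAt x (hasFDerivAt_norm hx)

theorem fderiv_comp_norm_apply {φ : ℝ → ℝ} (hφ : Differentiable ℝ φ)
    (hφ0 : (0 : ℝ) ∉ tsupport φ) (x v : E) :
    fderiv ℝ (fun y => φ ‖y‖) x v = deriv φ ‖x‖ * (‖x‖⁻¹ * ⟪x, v⟫) := by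
  rw [(hasFDerivAt_comp_norm hφ hφ0 x).fderiv, smul_apply, coe_innerSL_apply, smul_eq_mul,
    mul_assoc]

variable [FiniteDimensional ℝ E] [MeasurableSpace E] [BorelSpace E]
  (μ : Measure E) [μ.IsAddHaarMeasure]

theorem integral_comp_norm_mul_fderiv_eq_neg {G : E → ℝ} (hC1 : ContDiffOn ℝ 1 G {0}ᶜ) (v : E)
    {φ : ℝ → ℝ} (hφ : ContDiff ℝ 1 φ) (hφc : HasCompactSupport φ) (hφ0 : (0 : ℝ) ∉ tsupport φ) :
    ∫ x, φ ‖x‖ * fderiv ℝ G x v ∂μ = -∫ x, deriv φ ‖x‖ * (‖x‖⁻¹ * ⟪x, v⟫) * G x ∂μ := by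
  have hφd : Differentiable ℝ φ := hφ.differentiable one_ne_zero
  have hχ0 := zero_notMem_tsupport_comp_norm (E := E) hφ0
  have hφ'0 : (0 : ℝ) ∉ tsupport (deriv φ) := fun h => hφ0 (tsupport_deriv_subset h)
  simp_rw [← fderiv_comp_norm_apply hφd hφ0]
  refine integral_mul_fderiv_eq_neg_fderiv_mul_of_integrable ?_ ?_ ?_
    (fun x _ => (hasFDerivAt_comp_norm hφd hφ0 x).differentiableAt) fun x hx =>
      (hC1.differentiableOn one_ne_zero).differentiableAt
        (isOpen_compl_singleton.mem_nhds (ne_of_mem_of_not_mem hx hχ0))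
  · simp_rw [fderiv_comp_norm_apply hφd hφ0, mul_assoc]
    refine integrable_mul_of_continuousOn_compl_zero
      ((hφ.continuous_deriv le_rfl).comp continuous_norm) hφc.deriv.comp_norm
      (zero_notMem_tsupport_comp_norm hφ'0) ?_
    exact (continuous_norm.continuousOn.inv₀ fun x hx => norm_ne_zero_iff.mpr hx).mul
      ((continuous_id.inner continuous_const).continuousOn.mul hC1.continuousOn)
  · exact integrable_mul_of_continuousOn_compl_zero (hφd.continuous.comp continuous_norm)
      hφc.comp_norm hχ0
      ((hC1.continuousOn_fderiv_of_isOpen isOpen_compl_singleton le_rfl).clm_apply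
        continuousOn_const)
  · exact integrable_mul_of_continuousOn_compl_zero (hφd.continuous.comp continuous_norm)
      hφc.comp_norm hχ0 hC1.continuousOn

variable [Nontrivial E]

theorem integral_toSphere_fderiv_mul_integral_Ioi_eq_zero {G : E → ℝ}
    (hhom : ∀ t : ℝ, 0 < t → ∀ x : E, x ≠ 0 →
      G (t • x) = t ^ (-((Module.finrank ℝ E : ℝ) - 1)) * G x)
    (hC1 : ContDiffOn ℝ 1 G {0}ᶜ) (v : E) {φ : ℝ → ℝ} (hφ : ContDiff ℝ 1 φ)
    (hφc : HasCompactSupport φ) (hφ0 : (0 : ℝ) ∉ tsupport φ) :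
    (∫ ω : sphere (0 : E) 1, fderiv ℝ G ω v ∂μ.toSphere) * ∫ r in Ioi (0 : ℝ), φ r * r⁻¹ = 0 := by
  set a : ℝ := -((Module.finrank ℝ E : ℝ) - 1)
  have hGd : ∀ x : E, x ≠ 0 → DifferentiableAt ℝ G x := fun x hx =>
    (hC1.differentiableOn one_ne_zero).differentiableAt (isOpen_compl_singleton.mem_nhds hx)
  -- the Jacobian `r ^ (n - 1)` of polar coordinates cancels the homogeneity factor of `G`
  have hpow : ∀ r : ℝ, 0 < r → r ^ (Module.finrank ℝ E - 1) * r ^ a = 1 := by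
    intro r hr
    rw [← Real.rpow_natCast, Nat.cast_sub Module.finrank_pos, Nat.cast_one, ← Real.rpow_add hr]
    simp [a]
  have hnorm : ∀ ω ∈ sphere (0 : E) 1, ∀ r : ℝ, 0 < r → ‖r • ω‖ = r := fun ω hω r hr => by
    rw [norm_smul, mem_sphere_zero_iff_norm.mp hω, mul_one, Real.norm_of_nonneg hr.le]
  have hpolar₁ : ∀ ω ∈ sphere (0 : E) 1, ∀ r : ℝ, 0 < r →
      φ ‖r • ω‖ * fderiv ℝ G (r • ω) v = fderiv ℝ G ω v * (φ r * r ^ a * r⁻¹) := by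
    intro ω hω r hr
    rw [hnorm ω hω r hr, fderiv_smul_of_homogeneous hhom hGd hr (ne_of_mem_sphere hω one_ne_zero),
      Real.rpow_sub_one hr.ne', smul_apply, smul_eq_mul]
    ring
  have hpolar₂ : ∀ ω ∈ sphere (0 : E) 1, ∀ r : ℝ, 0 < r →
      deriv φ ‖r • ω‖ * (‖r • ω‖⁻¹ * ⟪r • ω, v⟫) * G (r • ω) =
        ⟪ω, v⟫ * G ω * (deriv φ r * r ^ a) := by
    intro ω hω r hr
    rw [hnorm ω hω r hr, real_inner_smul_left, hhom r hr ω (ne_of_mem_sphere hω one_ne_zero)]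
    field_simp
  calc (∫ ω : sphere (0 : E) 1, fderiv ℝ G ω v ∂μ.toSphere) * ∫ r in Ioi (0 : ℝ), φ r * r⁻¹
      = ∫ x, φ ‖x‖ * fderiv ℝ G x v ∂μ := by
        rw [integral_eq_integral_toSphere_mul_integral_Ioi μ hpolar₁]
        congr 1
        refine setIntegral_congr_fun measurableSet_Ioi fun r hr => ?_
        linear_combination -(φ r * r⁻¹) * hpow r hr
    _ = -((∫ ω : sphere (0 : E) 1, ⟪(ω : E), v⟫ * G ω ∂μ.toSphere) *
          ∫ r in Ioi (0 : ℝ), deriv φ r) := by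
        rw [integral_comp_norm_mul_fderiv_eq_neg μ hC1 v hφ hφc hφ0,
          integral_eq_integral_toSphere_mul_integral_Ioi μ hpolar₂]
        congr 2
        refine setIntegral_congr_fun measurableSet_Ioi fun r hr => ?_
        linear_combination (deriv φ r) * hpow r hr
    _ = 0 := by
        rw [hφc.integral_Ioi_deriv_eq hφ 0, image_eq_zero_of_notMem_tsupport hφ0, neg_zero,
          mul_zero, neg_zero]

theorem integral_toSphere_fderiv_eq_zero {G : E → ℝ}
    (hhom : ∀ t : ℝ, 0 < t → ∀ x : E, x ≠ 0 →
      G (t • x) = t ^ (-((Module.finrank ℝ E : ℝ) - 1)) * G x)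
    (hC1 : ContDiffOn ℝ 1 G {0}ᶜ) (v : E) :
    ∫ ω : sphere (0 : E) 1, fderiv ℝ G ω v ∂μ.toSphere = 0 := by
  -- With `φ r = r * b r` the radial weight `∫ r in Ioi 0, φ r * r⁻¹` is the integral of `b`.
  let b : ContDiffBump (2 : ℝ) := ⟨1 / 2, 1, by norm_num, by norm_num⟩
  have hb : ∀ r : ℝ, r ≤ 0 → b r = 0 := fun r hr =>
    b.zero_of_le_dist (by rw [Real.dist_eq, abs_of_neg (by linarith)]; show (1 : ℝ) ≤ _; linarith)
  have hφ0 : (0 : ℝ) ∉ tsupport fun r => r * b r := fun h => by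
    have := tsupport_mul_subset_right h
    rw [b.tsupport_eq, mem_closedBall, Real.dist_eq] at this
    norm_num at this
  have hpos : 0 < ∫ r in Ioi (0 : ℝ), r * b r * r⁻¹ := by
    rw [setIntegral_congr_fun (g := fun r => b r) measurableSet_Ioi fun r (hr : 0 < r) => by
        rw [mul_comm r, mul_inv_cancel_right₀ hr.ne'],
      setIntegral_eq_integral_of_forall_compl_eq_zero fun r (hr : r ∉ Ioi 0) => hb r (not_lt.mp hr)]
    exact b.integral_pos
  exact (mul_eq_zero.mp (integral_toSphere_fderiv_mul_integral_Ioi_eq_zero μ hhom hC1 v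
    (contDiff_id.mul b.contDiff) b.hasCompactSupport.mul_left hφ0)).resolve_right hpos.ne'

end InnerProductSpace

theorem sphere_integral_partial_deriv_eq_zero_general
    (d : ℕ) (G : EuclideanSpace ℝ (Fin d) → ℝ)
    (hhom : ∀ (t : ℝ), 0 < t → ∀ x : EuclideanSpace ℝ (Fin d), x ≠ 0 →
      G (t • x) = t ^ (-((d : ℝ) - 1)) * G x)
    (hC1 : ContDiffOn ℝ 1 G {(0 : EuclideanSpace ℝ (Fin d))}ᶜ) :
    ∀ i : Fin d,
      ∫ ξ in {ξ : EuclideanSpace ℝ (Fin d) | ‖ξ‖ = 1},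
        fderiv ℝ G ξ (EuclideanSpace.single i 1) ∂(μH[(d : ℝ) - 1]) = 0 := by
  intro i
  have hsphere : {ξ : EuclideanSpace ℝ (Fin d) | ‖ξ‖ = 1} = sphere 0 1 := by
    ext
    simp
  rw [hsphere, ← integral_subtype_comap isClosed_sphere.measurableSet]
  rcases subsingleton_or_nontrivial (EuclideanSpace ℝ (Fin d)) with hE | hE
  · exact integral_of_isEmpty
  refine (isUniformlyDistributed_comap_hausdorffMeasure _).integral_eq_zero
    isUniformlyDistributed_toSphere (Measure.toSphere_ne_zero _) ?_
    (integral_toSphere_fderiv_eq_zero volume (by simpa using hhom) hC1 _)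
  exact ((hC1.continuousOn_fderiv_of_isOpen isOpen_compl_singleton le_rfl).clm_apply
    continuousOn_const).comp_continuous continuous_subtype_val
    fun ω => ne_of_mem_sphere ω.2 one_ne_zero

/-- if `G` is homogeneous of degree `-(d-1)` and `C¹` off the origin, then the
integral of each partial derivative `∂ᵢ G` over the unit sphere vanishes. -/
theorem sphere_integral_partial_deriv_eq_zero
    (d : ℕ) (hd : 2 ≤ d) (G : EuclideanSpace ℝ (Fin d) → ℝ)
    (hhom : ∀ (t : ℝ), 0 < t → ∀ x : EuclideanSpace ℝ (Fin d), x ≠ 0 →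
      G (t • x) = t ^ (-((d : ℝ) - 1)) * G x)
    (hC1 : ContDiffOn ℝ 1 G {(0 : EuclideanSpace ℝ (Fin d))}ᶜ) :
    ∀ i : Fin d,
      ∫ ξ in {ξ : EuclideanSpace ℝ (Fin d) | ‖ξ‖ = 1},
        fderiv ℝ G ξ (EuclideanSpace.single i 1) ∂(μH[(d : ℝ) - 1]) = 0 :=
  sphere_integral_partial_deriv_eq_zero_general d G hhom hC1
end

section
/- The d×d matrix M with entries M_{ij} = ∫_{|ξ|=1} ξ_i² ξ_j² dσ(ξ) is positive definite; in particular it is invertible. -/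
/-!
For `z : ℝᵈ`, `zᵀ M z = ∫ (∑ zᵢ ξᵢ²)² dσ(ξ)`, so `M` is the Gram matrix of the functions `ξᵢ²` in
`L²(σ)`. The polynomial `∑ zᵢ ξᵢ²` equals `zᵢ` at the basis vector `eᵢ`, hence is nonzero on a
neighbourhood of `eᵢ` in the sphere, and every such neighbourhood has positive `μH[d-1]`-measure:
its orthogonal projection onto `eᵢ^⊥` contains a ball, and projections do not increase Hausdorff
measure. Integrability comes from `μH[d-1](S^{d-1}) < ∞`: by compactness the sphere is covered
by finitely many hemisphere graphs `w ↦ w + √(1 - ‖w‖²) v` over closed balls of radius `1/2`,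
and these are Lipschitz there.
-/
open MeasureTheory Metric Set Filter Topology Module
open scoped InnerProductSpace

section HemisphereGraph

variable {E : Type*} [NormedAddCommGroup E] [InnerProductSpace ℝ E] {v : E}

noncomputable def hemisphereGraph (v : E) (w : (ℝ ∙ v)ᗮ) : E := (w : E) + √(1 - ‖w‖ ^ 2) • v

lemma hemisphereGraph_zero (v : E) : hemisphereGraph v 0 = v := by
  simp [hemisphereGraph]

lemma norm_add_smul_sq_of_mem_orthogonal (hv : ‖v‖ = 1) (w : (ℝ ∙ v)ᗮ) (t : ℝ) :
    ‖(w : E) + t • v‖ ^ 2 = ‖w‖ ^ 2 + t ^ 2 := by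
  have hwv : ⟪(w : E), t • v⟫_ℝ = 0 := by
    rw [inner_smul_right, real_inner_comm,
      Submodule.mem_orthogonal_singleton_iff_inner_right.mp w.2, mul_zero]
  rw [sq, norm_add_sq_eq_norm_sq_add_norm_sq_of_inner_eq_zero _ _ hwv, norm_smul, hv,
    Real.norm_eq_abs, mul_one, abs_mul_abs_self]
  simp [sq]

lemma norm_hemisphereGraph (hv : ‖v‖ = 1) {w : (ℝ ∙ v)ᗮ} (hw : ‖w‖ ≤ 1) :
    ‖hemisphereGraph v w‖ = 1 := by
  have hsq : ‖hemisphereGraph v w‖ ^ 2 = 1 ^ 2 := by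
    rw [hemisphereGraph, norm_add_smul_sq_of_mem_orthogonal hv,
      Real.sq_sqrt (by nlinarith [norm_nonneg w])]
    ring
  exact (pow_left_inj₀ (norm_nonneg _) zero_le_one two_ne_zero).mp hsq

lemma orthogonalProjectionOnto_hemisphereGraph (w : (ℝ ∙ v)ᗮ) :
    (ℝ ∙ v)ᗮ.orthogonalProjectionOnto (hemisphereGraph v w) = w := by
  simp [hemisphereGraph, Submodule.orthogonalProjectionOnto_orthogonalComplement_singleton_eq_zero]

lemma hemisphereGraph_orthogonalProjectionOnto (hv : ‖v‖ = 1) {x : E} (hx : ‖x‖ = 1)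
    (hvx : 0 ≤ ⟪v, x⟫_ℝ) : hemisphereGraph v ((ℝ ∙ v)ᗮ.orthogonalProjectionOnto x) = x := by
  set y := (ℝ ∙ v)ᗮ.orthogonalProjectionOnto x
  have split : x = (y : E) + ⟪v, x⟫_ℝ • v := by
    rw [← Submodule.starProjection_unit_singleton ℝ hv x, add_comm]
    exact ((ℝ ∙ v).starProjection_add_starProjection_orthogonal x).symm
  have pythag : ‖y‖ ^ 2 + ⟪v, x⟫_ℝ ^ 2 = 1 := by
    rw [← norm_add_smul_sq_of_mem_orthogonal hv, ← split, hx, one_pow]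
  conv_rhs => rw [split]
  rw [hemisphereGraph, ← pythag, add_sub_cancel_left, Real.sqrt_sq hvx]

lemma contDiffOn_hemisphereGraph {n : WithTop ℕ∞} :
    ContDiffOn ℝ n (hemisphereGraph v) (ball 0 1) := by
  intro w hw
  have hw1 : 1 - ‖w‖ ^ 2 ≠ 0 := by
    rw [mem_ball_zero_iff] at hw
    nlinarith [norm_nonneg w]
  refine ContDiffAt.contDiffWithinAt ?_
  exact (ℝ ∙ v)ᗮ.subtypeL.contDiff.contDiffAt.add
    ((contDiffAt_const.sub (contDiff_norm_sq ℝ).contDiffAt).sqrt hw1 |>.smul contDiffAt_const)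

end HemisphereGraph

lemma ContDiffOn.hausdorffMeasure_image_lt_top {F G : Type*}
    [NormedAddCommGroup F] [NormedSpace ℝ F] [FiniteDimensional ℝ F]
    [MeasurableSpace F] [BorelSpace F] [NormedAddCommGroup G] [NormedSpace ℝ G]
    [MeasurableSpace G] [BorelSpace G] {f : F → G} {s : Set F}
    (hf : ContDiffOn ℝ 1 f s) (hs : Convex ℝ s) (hs' : IsCompact s) :
    μH[finrank ℝ F] (f '' s) < ⊤ := by
  obtain ⟨K, hK⟩ := hf.exists_lipschitzOnWith one_ne_zero hs hs'
  calc μH[finrank ℝ F] (f '' s) ≤ K ^ (finrank ℝ F : ℝ) * μH[finrank ℝ F] s :=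
        hK.hausdorffMeasure_image_le (Nat.cast_nonneg _)
    _ < ⊤ := ENNReal.mul_lt_top (by simp) hs'.measure_lt_top

section Sphere

variable {E : Type*} [NormedAddCommGroup E] [InnerProductSpace ℝ E] [FiniteDimensional ℝ E]
  [MeasurableSpace E] [BorelSpace E] {n : ℕ}

lemma hausdorffMeasure_sphere_lt_top (hE : finrank ℝ E = n + 1) :
    μH[n] (sphere (0 : E) 1) < ⊤ := by
  have : Fact (finrank ℝ E = n + 1) := ⟨hE⟩
  let cap : E → Set E := fun v =>
    {x | 0 < ⟪v, x⟫_ℝ} ∩ (ℝ ∙ v)ᗮ.orthogonalProjectionOnto ⁻¹' closedBall 0 2⁻¹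
  have hcap_nhds : ∀ v ∈ sphere (0 : E) 1, cap v ∈ 𝓝 v := fun v hv => by
    refine inter_mem ((isOpen_lt continuous_const (continuous_const.inner continuous_id)).mem_nhds
      ?_) ((ContinuousLinearMap.continuous _).continuousAt.preimage_mem_nhds ?_)
    · simp [mem_sphere_zero_iff_norm.mp hv]
    · rw [Submodule.orthogonalProjectionOnto_orthogonalComplement_singleton_eq_zero]
      exact closedBall_mem_nhds 0 (by norm_num)
  obtain ⟨t, ht, hcover⟩ := (isCompact_sphere (0 : E) 1).elim_nhds_subcover cap hcap_nhds
  have hsub : sphere (0 : E) 1 ⊆ ⋃ v ∈ t, hemisphereGraph v '' closedBall 0 2⁻¹ := by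
    intro x hx
    obtain ⟨v, hvt, hvx, hxv⟩ := mem_iUnion₂.mp (hcover hx)
    refine mem_iUnion₂.mpr ⟨v, hvt, _, hxv, ?_⟩
    exact hemisphereGraph_orthogonalProjectionOnto (by simpa using ht v hvt) (by simpa using hx)
      (le_of_lt hvx)
  refine (measure_mono hsub).trans_lt <| (measure_biUnion_finset_le _ _).trans_lt <|
    ENNReal.sum_lt_top.mpr fun v hvt => ?_
  have hdim : finrank ℝ (ℝ ∙ v)ᗮ = n :=
    Submodule.finrank_orthogonal_span_singleton (ne_zero_of_mem_unit_sphere ⟨v, ht v hvt⟩)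
  rw [← hdim]
  exact ContDiffOn.hausdorffMeasure_image_lt_top
    (contDiffOn_hemisphereGraph.mono (closedBall_subset_ball (by norm_num)))
    (convex_closedBall 0 _) (isCompact_closedBall 0 _)

lemma sphere_subset_support_restrict_hausdorffMeasure (hE : finrank ℝ E = n + 1) :
    sphere (0 : E) 1 ⊆ (μH[n].restrict (sphere (0 : E) 1)).support := by
  have : Fact (finrank ℝ E = n + 1) := ⟨hE⟩
  intro p hp
  refine (Measure.mem_support_iff_forall p).mpr fun U hU => ?_
  rw [Measure.restrict_apply' isClosed_sphere.measurableSet]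
  have hp1 : ‖p‖ = 1 := by simpa using hp
  set V := hemisphereGraph p ⁻¹' U ∩ ball 0 1
  have hV : V ∈ 𝓝 0 := by
    refine inter_mem ?_ (ball_mem_nhds 0 one_pos)
    refine ((contDiffOn_hemisphereGraph (n := 0)).continuousOn.continuousAt
      (ball_mem_nhds 0 one_pos)).preimage_mem_nhds ?_
    rwa [hemisphereGraph_zero]
  have hVsub : V ⊆ (ℝ ∙ p)ᗮ.orthogonalProjectionOnto '' (U ∩ sphere 0 1) := by
    intro w ⟨hwU, hw⟩
    refine ⟨hemisphereGraph p w, ⟨hwU, ?_⟩, orthogonalProjectionOnto_hemisphereGraph w⟩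
    rw [mem_ball_zero_iff] at hw
    simpa using norm_hemisphereGraph hp1 hw.le
  have hdim : finrank ℝ (ℝ ∙ p)ᗮ = n :=
    Submodule.finrank_orthogonal_span_singleton (ne_zero_of_mem_unit_sphere ⟨p, hp⟩)
  calc (0 : ENNReal) < μH[n] V := by
        rw [← hdim]; exact Measure.measure_pos_of_mem_nhds _ hV
    _ ≤ μH[n] ((ℝ ∙ p)ᗮ.orthogonalProjectionOnto '' (U ∩ sphere 0 1)) := measure_mono hVsub
    _ ≤ μH[n] (U ∩ sphere 0 1) :=
        hausdorffMeasure_orthogonalProjectionOnto_le _ _ _ (Nat.cast_nonneg _)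

end Sphere

section Gram

open Matrix

lemma sq_sum_mul {ι : Type*} [Fintype ι] (c a : ι → ℝ) :
    (∑ i, c i * a i) ^ 2 = ∑ i, ∑ j, c i * c j * (a i * a j) := by
  rw [sq, Finset.sum_mul_sum]
  exact Finset.sum_congr rfl fun i _ => Finset.sum_congr rfl fun j _ => by ring

variable {X ι : Type*} [MeasurableSpace X] {μ : Measure X} [Fintype ι] {f : ι → X → ℝ}

lemma integrable_sum_mul_sq (hf : ∀ i j, Integrable (fun x => f i x * f j x) μ) (c : ι → ℝ) :
    Integrable (fun x => (∑ i, c i * f i x) ^ 2) μ := by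
  simp_rw [sq_sum_mul]
  exact integrable_finsetSum _ fun i _ => integrable_finsetSum _ fun j _ => (hf i j).const_mul _

lemma dotProduct_mulVec_integral_mul (hf : ∀ i j, Integrable (fun x => f i x * f j x) μ)
    (c : ι → ℝ) :
    c ⬝ᵥ (of fun i j => ∫ x, f i x * f j x ∂μ) *ᵥ c = ∫ x, (∑ i, c i * f i x) ^ 2 ∂μ := by
  simp_rw [sq_sum_mul]
  rw [integral_finsetSum _ fun i _ => integrable_finsetSum _ fun j _ => (hf i j).const_mul _]
  simp_rw [integral_finsetSum _ fun j _ => (hf _ j).const_mul _, integral_const_mul]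
  simp only [dotProduct, mulVec, of_apply, Finset.mul_sum]
  exact Finset.sum_congr rfl fun i _ => Finset.sum_congr rfl fun j _ => by ring

variable [TopologicalSpace X]

lemma integral_pos_of_mem_support {g : X → ℝ} (hg : Continuous g) (hg₀ : 0 ≤ g)
    (hgi : Integrable g μ) {x : X} (hx : x ∈ μ.support) (hgx : g x ≠ 0) :
    0 < ∫ y, g y ∂μ := by
  rw [integral_pos_iff_support_of_nonneg hg₀ hgi]
  exact (Measure.mem_support_iff_forall x).mp hx _
    ((isOpen_compl_singleton.preimage hg).mem_nhds hgx)

theorem posDef_of_integral_mul (hf : ∀ i, Continuous (f i))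
    (hfi : ∀ i j, Integrable (fun x => f i x * f j x) μ)
    (hind : ∀ c : ι → ℝ, c ≠ 0 → ∃ x ∈ μ.support, ∑ i, c i * f i x ≠ 0) :
    (of fun i j => ∫ x, f i x * f j x ∂μ).PosDef := by
  refine posDef_iff_dotProduct_mulVec.mpr ⟨?_, fun c hc => ?_⟩
  · ext i j
    simp [mul_comm]
  obtain ⟨x, hx, hcx⟩ := hind c hc
  rw [star_trivial, dotProduct_mulVec_integral_mul hfi]
  exact integral_pos_of_mem_support (by fun_prop) (fun _ => sq_nonneg _)
    (integrable_sum_mul_sq hfi c) hx (pow_ne_zero 2 hcx)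

end Gram

open Matrix in
/-- the matrix `M_{ij} = ∫_{|ξ|=1} ξᵢ²ξⱼ² dσ(ξ)` is positive definite, and in
particular invertible. -/
theorem moment_matrix_posDef
    (d : ℕ) (hd : 1 ≤ d)
    (M : Matrix (Fin d) (Fin d) ℝ)
    (hM : ∀ i j : Fin d, M i j =
      ∫ ξ in {ξ : EuclideanSpace ℝ (Fin d) | ‖ξ‖ = 1},
        (ξ i) ^ 2 * (ξ j) ^ 2 ∂(μH[(d : ℝ) - 1])) :
    M.PosDef ∧ IsUnit M.det := by
  obtain ⟨n, rfl⟩ : ∃ n, d = n + 1 := ⟨d - 1, by omega⟩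
  set S := sphere (0 : EuclideanSpace ℝ (Fin (n + 1))) 1
  have hE : finrank ℝ (EuclideanSpace ℝ (Fin (n + 1))) = n + 1 := finrank_euclideanSpace_fin
  have hM' : M = of fun i j => ∫ ξ, ξ i ^ 2 * ξ j ^ 2 ∂(μH[n].restrict S) := by
    ext i j
    rw [hM, of_apply, show {ξ : EuclideanSpace ℝ (Fin (n + 1)) | ‖ξ‖ = 1} = S by ext; simp [S],
      show ((n + 1 : ℕ) : ℝ) - 1 = n by push_cast; ring]
  have hpos : M.PosDef := by
    rw [hM']
    refine posDef_of_integral_mul (by fun_prop) (fun i j => ?_) fun c hc => ?_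
    · have hcont : Continuous fun ξ : EuclideanSpace ℝ (Fin (n + 1)) => ξ i ^ 2 * ξ j ^ 2 := by
        fun_prop
      exact hcont.continuousOn.integrableOn_of_subset_isCompact (isCompact_sphere 0 1)
        isClosed_sphere.measurableSet subset_rfl (hausdorffMeasure_sphere_lt_top hE).ne
    · obtain ⟨i, hi⟩ := Function.ne_iff.mp hc
      refine ⟨EuclideanSpace.single i 1,
        sphere_subset_support_restrict_hausdorffMeasure hE (by simp), ?_⟩
      simpa using hi
  exact ⟨hpos, (isUnit_iff_isUnit_det M).mp hpos.isUnit⟩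
end
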